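/- arXiv:2208.00429 — 7 statements merged into one kernel-verified Lean document; each statement's English description precedes it below -/
import Mathlib

section
/- Let (t, d) be a pseudorepresentation of a group G on a commutative ring B. Then the set ker(t, d) := {g ∈ G : d(g) = 1 and t(gh) = t(h) for all h ∈ G} is a normal subgroup of G. -/
/-- A (dimension-2) pseudorepresentation of a group `G` on a commutative ring `B`. -/
def IsPseudoRep {G : Type*} [Group G] {B : Type*} [CommRing B] (t d : G → B) : Prop :=
  t 1 = 2 ∧
  d 1 = 1 ∧
  (∀ g h : G, d (g * h) = d g * d h) ∧
  (∀ g : G, IsUnit (d g)) ∧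
  (∀ g h : G, t (g * h) = t (h * g)) ∧
  (∀ g h : G, d g * t (g⁻¹ * h) + t (g * h) = t g * t h)

/-- The kernel `{g ∈ G : d g = 1 and t (g h) = t h for all h}` of a pseudorepresentation
`(t, d)` of `G` on `B` is a normal subgroup of `G`. -/
theorem stmt2 {G : Type*} [Group G] {B : Type*} [CommRing B]
    (t d : G → B) (h : IsPseudoRep t d) :
    ∃ H : Subgroup G, H.Normal ∧
      (H : Set G) = {g : G | d g = 1 ∧ ∀ x : G, t (g * x) = t x} := by
  obtain ⟨h1, hd1, hdm, hdu, hts, htd⟩ := h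
  refine ⟨⟨⟨⟨{g : G | d g = 1 ∧ ∀ x : G, t (g * x) = t x}, ?_⟩, ?_⟩, ?_⟩, ⟨?_⟩, rfl⟩
  · rintro a b ⟨hda, hta⟩ ⟨hdb, htb⟩
    refine ⟨by rw [hdm, hda, hdb, one_mul], fun x => by
      rw [mul_assoc, hta, htb]⟩
  · exact ⟨hd1, fun x => by rw [one_mul]⟩
  · rintro g ⟨hdg, htg⟩
    have hdinv : d g⁻¹ = 1 := by
      have := hdm g g⁻¹
      rw [mul_inv_cancel, hd1, hdg, one_mul] at this
      exact this.symm
    have htg2 : t g = 2 := by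
      have := htg 1
      rwa [mul_one, h1] at this
    refine ⟨hdinv, fun x => ?_⟩
    have := htd g x
    rw [hdg, htg x, htg2, one_mul] at this
    linear_combination this
  · rintro g ⟨hdg, htg⟩ n
    refine ⟨by rw [hdm, hdm, hdg, mul_one, ← hdm, mul_inv_cancel, hd1], fun x => ?_⟩
    calc t (n * g * n⁻¹ * x) = t (g * n⁻¹ * x * n) := by
          rw [show n * g * n⁻¹ * x = n * (g * n⁻¹ * x) by group, hts]
      _ = t (n⁻¹ * (x * n)) := by rw [mul_assoc, mul_assoc, htg]
      _ = t x := by rw [hts, show x * n * n⁻¹ = x by group]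
end

section
/- Let K be an algebraically closed field, let D be a group, let I be a normal subgroup of D such that the quotient D/I is commutative, and let ρ : D → GL₂(K) be a group homomorphism. Then the following are equivalent: (i) (ρ(i) − 1)² = 0 for all i ∈ I; (ii) tr ρ(i) = 2 and det ρ(i) = 1 for all i ∈ I; (iii) there exists P ∈ GL₂(K) such that P⁻¹·ρ(d)·P is upper triangular for every d ∈ D, and P⁻¹·ρ(i)·P is upper triangular with both diagonal entries equal to 1 for every i ∈ I; (iv) det ρ(i) = 1 and tr(ρ(d)·ρ(i)) = tr(ρ(d)) for all i ∈ I and all d ∈ D. -/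
/-!
Conditions (i) and (ii) are equivalent by the Cayley–Hamilton identity `A² - tr A • A + det A = 0`
for `2 × 2` matrices, and (iii) ⇒ (iv) ⇒ (ii) are trace computations with upper triangular
matrices. The content is (i) ⇒ (iii): it suffices to find a common eigenvector `v` of `ρ(D)`
fixed by `ρ(I)`, and to put `v` in the first column of `P`.

In dimension two, the kernel of a nonzero singular matrix `B` is a line, so a vector `w` with
`B w = 0` is a multiple of any nonzero such `v`. If `ρ(I)` is trivial, `ρ(D)` is commutative
and every matrix of it preserves the eigenline of a non-scalar `ρ(d₀)`. Otherwise take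
`N = ρ(i₀) - 1 ≠ 0` with `i₀ ∈ I`. For `M = ρ(i) - 1`, unipotence of `ρ(i₀ i)` gives
`tr (N M) = 0`, so the traceless matrices `N` and `M` anticommute; hence `M` preserves the line
`ker N`, and being nilpotent it kills it. Since `I` is normal, `ρ(d)⁻¹ ρ(i₀) ρ(d)` fixes
`ker N`, i.e. `ρ(d)` maps `ker N` into itself.
-/

open Matrix

namespace Matrix

section CommRing

variable {R : Type*} [CommRing R]

theorem cayley_hamilton_fin_two (A : Matrix (Fin 2) (Fin 2) R) :
    A ^ 2 - A.trace • A + A.det • (1 : Matrix (Fin 2) (Fin 2) R) = 0 := by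
  ext i j
  fin_cases i <;> fin_cases j <;> simp [sq, mul_apply, trace_fin_two, det_fin_two] <;> ring

theorem mul_add_mul_eq_trace_mul_smul_one {N M : Matrix (Fin 2) (Fin 2) R}
    (hN : N.trace = 0) (hM : M.trace = 0) : N * M + M * N = (N * M).trace • 1 := by
  rw [trace_fin_two] at hN hM
  ext i j
  fin_cases i <;> fin_cases j <;> simp [mul_apply, trace_fin_two]
  · linear_combination N 0 0 * hM - M 1 1 * hN
  · linear_combination M 0 1 * hN + N 0 1 * hM
  · linear_combination M 1 0 * hN + N 1 0 * hM
  · linear_combination N 1 1 * hM - M 0 0 * hN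

theorem trace_mul_eq_of_unipotent {A U : Matrix (Fin 2) (Fin 2) R} (hA : A 1 0 = 0)
    (hU : U 1 0 = 0) (hU₀ : U 0 0 = 1) (hU₁ : U 1 1 = 1) : (A * U).trace = A.trace := by
  simp [trace_fin_two, mul_apply, hA, hU, hU₀, hU₁]

theorem sub_one_sq_eq_zero_iff_fin_two [IsReduced R] [Nontrivial R]
    {A : Matrix (Fin 2) (Fin 2) R} : (A - 1) ^ 2 = 0 ↔ A.trace = 2 ∧ A.det = 1 := by
  have hsq : (A - 1) ^ 2 = A ^ 2 - (2 : R) • A + (1 : R) • 1 := by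
    rw [two_smul, one_smul]
    noncomm_ring
  have hCH := cayley_hamilton_fin_two A
  constructor
  · intro h
    have htr : A.trace = 2 := by
      have := (isNilpotent_trace_of_isNilpotent ⟨2, h⟩).eq_zero
      rw [trace_sub, trace_one, sub_eq_zero] at this
      simpa using this
    refine ⟨htr, ?_⟩
    have hdet : (A.det - 1) • (1 : Matrix (Fin 2) (Fin 2) R) = 0 := by
      rw [htr] at hCH
      rw [hsq] at h
      rw [sub_smul, ← sub_eq_zero.mpr (hCH.trans h.symm)]
      abel
    simpa [sub_eq_zero] using congrFun (congrFun hdet 0) 0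
  · rintro ⟨htr, hdet⟩
    rwa [hsq, ← hdet, ← htr]

end CommRing

section Field

variable {K : Type*} [Field K]

theorem exists_smul_eq_of_mulVec_eq_zero {B : Matrix (Fin 2) (Fin 2) K} (hB : B ≠ 0)
    {v w : Fin 2 → K} (hv₀ : v ≠ 0) (hv : B *ᵥ v = 0) (hw : B *ᵥ w = 0) :
    ∃ c : K, c • v = w := by
  by_contra! h
  have hspan := ((LinearIndependent.pair_iff' hv₀).mpr h).span_eq_top_of_card_eq_finrank
    (by simp)
  apply hB
  apply toLin'.injective
  rw [map_zero]
  refine LinearMap.ext_on_range hspan fun i => ?_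
  fin_cases i <;> simp [hv, hw]

theorem exists_mulVec_eq_smul [IsAlgClosed K] {n : Type*} [Fintype n] [DecidableEq n]
    [Nonempty n] (A : Matrix n n K) : ∃ c : K, ∃ v ≠ 0, A *ᵥ v = c • v := by
  obtain ⟨c, hc⟩ := Module.End.exists_eigenvalue (toLin' A)
  obtain ⟨v, hv, hv₀⟩ := hc.exists_hasEigenvector
  exact ⟨c, v, hv₀, by simpa [Module.End.mem_eigenspace_iff] using hv⟩

theorem exists_common_eigenvector_of_commute [IsAlgClosed K]
    {S : Set (Matrix (Fin 2) (Fin 2) K)} (hS : ∀ A ∈ S, ∀ B ∈ S, Commute A B) :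
    ∃ v ≠ 0, ∀ A ∈ S, ∃ c : K, A *ᵥ v = c • v := by
  by_cases hscalar : ∀ A ∈ S, ∃ c : K, A = c • 1
  · refine ⟨Pi.single 0 1, by simp, fun A hA => ?_⟩
    obtain ⟨c, rfl⟩ := hscalar A hA
    exact ⟨c, by rw [smul_mulVec, one_mulVec]⟩
  push Not at hscalar
  obtain ⟨A₀, hA₀, hA₀_ne⟩ := hscalar
  obtain ⟨c₀, v, hv₀, hv⟩ := exists_mulVec_eq_smul A₀
  refine ⟨v, hv₀, fun A hA => ?_⟩
  have hB : A₀ - c₀ • 1 ≠ 0 := sub_ne_zero.mpr (hA₀_ne c₀)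
  have hBv : (A₀ - c₀ • 1) *ᵥ v = 0 := by
    rw [sub_mulVec, hv, smul_mulVec, one_mulVec, sub_self]
  have hcomm : Commute (A₀ - c₀ • 1) A :=
    (hS A₀ hA₀ A hA).sub_left ((Commute.one_left A).smul_left c₀)
  obtain ⟨c, hc⟩ := exists_smul_eq_of_mulVec_eq_zero hB hv₀ hBv
    (w := A *ᵥ v) (by rw [mulVec_mulVec, hcomm.eq, ← mulVec_mulVec, hBv, mulVec_zero])
  exact ⟨c, hc.symm⟩

theorem mulVec_eq_self_of_sub_one_sq_eq_zero {A B : Matrix (Fin 2) (Fin 2) K}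
    (hA : (A - 1) ^ 2 = 0) (hB : (B - 1) ^ 2 = 0) (hAB : (A * B - 1) ^ 2 = 0) (hA₁ : A ≠ 1)
    {v : Fin 2 → K} (hv₀ : v ≠ 0) (hv : A *ᵥ v = v) : B *ᵥ v = v := by
  set N := A - 1 with hN
  set M := B - 1 with hM
  have htrace {C : Matrix (Fin 2) (Fin 2) K} (hC : (C - 1) ^ 2 = 0) : (C - 1).trace = 0 := by
    rw [trace_sub, (sub_one_sq_eq_zero_iff_fin_two.mp hC).1, trace_one]
    simp
  have hNM : (N * M).trace = 0 := by
    have h := htrace hAB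
    rwa [show A * B - 1 = N * M + N + M by rw [hN, hM]; noncomm_ring, trace_add, trace_add,
      htrace hA, htrace hB, add_zero, add_zero] at h
  have hanti : N * M = -(M * N) := by
    rw [eq_neg_iff_add_eq_zero, mul_add_mul_eq_trace_mul_smul_one (htrace hA) (htrace hB), hNM,
      zero_smul]
  have hNv : N *ᵥ v = 0 := by simp [hN, sub_mulVec, hv]
  obtain ⟨c, hc⟩ := exists_smul_eq_of_mulVec_eq_zero (sub_ne_zero.mpr hA₁) hv₀ hNv (w := M *ᵥ v)
    (by rw [mulVec_mulVec, hanti, neg_mulVec, ← mulVec_mulVec, hNv, mulVec_zero, neg_zero])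
  have hc₀ : c = 0 := by
    have h : M *ᵥ (M *ᵥ v) = 0 := by rw [mulVec_mulVec, ← sq, hB, zero_mulVec]
    rw [← hc, mulVec_smul, ← hc, smul_smul, smul_eq_zero] at h
    exact mul_self_eq_zero.mp (h.resolve_right hv₀)
  have hMv : M *ᵥ v = 0 := by rw [← hc, hc₀, zero_smul]
  rwa [hM, sub_mulVec, one_mulVec, sub_eq_zero] at hMv

end Field

namespace GeneralLinearGroup

theorem conj_mulVec_eq_smul {n R : Type*} [Fintype n] [DecidableEq n] [CommRing R]
    {P M : GL n R} {e : n → R} {c : R}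
    (h : (M : Matrix n n R) *ᵥ ((P : Matrix n n R) *ᵥ e) = c • ((P : Matrix n n R) *ᵥ e)) :
    ((P⁻¹ * M * P : GL n R) : Matrix n n R) *ᵥ e = c • e := by
  rw [Units.val_mul, Units.val_mul, ← mulVec_mulVec, ← mulVec_mulVec, h, mulVec_smul,
    mulVec_mulVec, ← Units.val_mul, inv_mul_cancel, Units.val_one, one_mulVec]

section CommRing

variable {R : Type*} [CommRing R]

theorem conj_apply_of_mulVec_eq_smul {P M : GL (Fin 2) R} {c : R}
    (h : (M : Matrix (Fin 2) (Fin 2) R) *ᵥ ((P : Matrix (Fin 2) (Fin 2) R) *ᵥ Pi.single 0 1) =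
      c • ((P : Matrix (Fin 2) (Fin 2) R) *ᵥ Pi.single 0 1)) :
    ((P⁻¹ * M * P : GL (Fin 2) R) : Matrix (Fin 2) (Fin 2) R) 1 0 = 0 ∧
      ((P⁻¹ * M * P : GL (Fin 2) R) : Matrix (Fin 2) (Fin 2) R) 0 0 = c := by
  have hcol := conj_mulVec_eq_smul h
  exact ⟨by simpa using congrFun hcol 1, by simpa using congrFun hcol 0⟩

theorem trace_mul_eq_of_conj_unipotent {P A U : GL (Fin 2) R}
    (hA : ((P⁻¹ * A * P : GL (Fin 2) R) : Matrix (Fin 2) (Fin 2) R) 1 0 = 0)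
    (hU : ((P⁻¹ * U * P : GL (Fin 2) R) : Matrix (Fin 2) (Fin 2) R) 1 0 = 0)
    (hU₀ : ((P⁻¹ * U * P : GL (Fin 2) R) : Matrix (Fin 2) (Fin 2) R) 0 0 = 1)
    (hU₁ : ((P⁻¹ * U * P : GL (Fin 2) R) : Matrix (Fin 2) (Fin 2) R) 1 1 = 1) :
    ((A : Matrix (Fin 2) (Fin 2) R) * U).trace = (A : Matrix (Fin 2) (Fin 2) R).trace := by
  have h := trace_mul_eq_of_unipotent hA hU hU₀ hU₁
  rwa [← Units.val_mul, show P⁻¹ * A * P * (P⁻¹ * U * P) = P⁻¹ * (A * U) * P by group,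
    Units.val_mul, Units.val_mul, Units.val_mul, Units.val_mul, Units.val_mul, trace_units_conj',
    trace_units_conj'] at h

theorem det_eq_one_of_conj_unipotent {P U : GL (Fin 2) R}
    (hU : ((P⁻¹ * U * P : GL (Fin 2) R) : Matrix (Fin 2) (Fin 2) R) 1 0 = 0)
    (hU₀ : ((P⁻¹ * U * P : GL (Fin 2) R) : Matrix (Fin 2) (Fin 2) R) 0 0 = 1)
    (hU₁ : ((P⁻¹ * U * P : GL (Fin 2) R) : Matrix (Fin 2) (Fin 2) R) 1 1 = 1) :
    (U : Matrix (Fin 2) (Fin 2) R).det = 1 := by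
  have h := det_fin_two ((P⁻¹ * U * P : GL (Fin 2) R) : Matrix (Fin 2) (Fin 2) R)
  rwa [hU, hU₀, hU₁, mul_zero, sub_zero, mul_one, Units.val_mul, Units.val_mul,
    det_units_conj'] at h

end CommRing

theorem exists_mulVec_single_eq {K : Type*} [Field K] {v : Fin 2 → K} (hv : v ≠ 0) :
    ∃ P : GL (Fin 2) K, (P : Matrix (Fin 2) (Fin 2) K) *ᵥ Pi.single 0 1 = v := by
  by_cases h₀ : v 0 = 0
  · have h₁ : v 1 ≠ 0 := fun h₁ => hv (by ext i; fin_cases i <;> simp [h₀, h₁])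
    refine ⟨mkOfDetNeZero !![v 0, 1; v 1, 0] (by simpa [det_fin_two]), ?_⟩
    ext i; fin_cases i <;> simp
  · refine ⟨mkOfDetNeZero !![v 0, 0; v 1, 1] (by simpa [det_fin_two]), ?_⟩
    ext i; fin_cases i <;> simp

end GeneralLinearGroup

end Matrix

namespace MonoidHom

theorem commute_of_commutator_mem {G H : Type*} [Group G] [Group H] (f : G →* H)
    {I : Subgroup G} (hcomm : ∀ a b : G, a * b * a⁻¹ * b⁻¹ ∈ I) (hf : ∀ i ∈ I, f i = 1)
    (a b : G) : Commute (f a) (f b) := by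
  rw [← commutatorElement_eq_one_iff_commute, ← map_commutatorElement]
  exact hf _ (hcomm a b)

variable {K : Type*} [Field K] {D : Type*} [Group D] {I : Subgroup D} [I.Normal]
  (ρ : D →* GL (Fin 2) K)

theorem forall_mulVec_eq_self_and_exists_mulVec_eq_smul
    (hI : ∀ i ∈ I, ((ρ i : Matrix (Fin 2) (Fin 2) K) - 1) ^ 2 = 0) {i₀ : D} (hi₀ : i₀ ∈ I)
    (hne : ρ i₀ ≠ 1) {v : Fin 2 → K} (hv₀ : v ≠ 0)
    (hv : (ρ i₀ : Matrix (Fin 2) (Fin 2) K) *ᵥ v = v) :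
    (∀ i ∈ I, (ρ i : Matrix (Fin 2) (Fin 2) K) *ᵥ v = v) ∧
      ∀ d, ∃ c : K, (ρ d : Matrix (Fin 2) (Fin 2) K) *ᵥ v = c • v := by
  have hne' : (ρ i₀ : Matrix (Fin 2) (Fin 2) K) ≠ 1 := by rwa [Ne, Units.val_eq_one]
  have hfix : ∀ i ∈ I, (ρ i : Matrix (Fin 2) (Fin 2) K) *ᵥ v = v := fun i hi =>
    mulVec_eq_self_of_sub_one_sq_eq_zero (hI i₀ hi₀) (hI i hi)
      (by simpa using hI _ (I.mul_mem hi₀ hi)) hne' hv₀ hv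
  refine ⟨hfix, fun d => ?_⟩
  have hconj : (ρ i₀ : Matrix (Fin 2) (Fin 2) K) * ρ d = ρ d * ρ (d⁻¹ * i₀ * d) := by
    simp [← Units.val_mul, ← map_mul, mul_assoc]
  have hker : ((ρ i₀ : Matrix (Fin 2) (Fin 2) K) - 1) *ᵥ (ρ d *ᵥ v) = 0 := by
    rw [sub_mulVec, one_mulVec, mulVec_mulVec, hconj, ← mulVec_mulVec,
      hfix _ (by simpa using Subgroup.Normal.conj_mem ‹_› i₀ hi₀ d⁻¹), sub_self]
  have hNv : ((ρ i₀ : Matrix (Fin 2) (Fin 2) K) - 1) *ᵥ v = 0 := by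
    rw [sub_mulVec, one_mulVec, hv, sub_self]
  obtain ⟨c, hc⟩ := exists_smul_eq_of_mulVec_eq_zero (sub_ne_zero.mpr hne') hv₀ hNv hker
  exact ⟨c, hc.symm⟩

variable [IsAlgClosed K]

theorem exists_common_eigenvector (hcomm : ∀ a b : D, a * b * a⁻¹ * b⁻¹ ∈ I)
    (hI : ∀ i ∈ I, ((ρ i : Matrix (Fin 2) (Fin 2) K) - 1) ^ 2 = 0) :
    ∃ v ≠ 0, (∀ i ∈ I, (ρ i : Matrix (Fin 2) (Fin 2) K) *ᵥ v = v) ∧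
      ∀ d, ∃ c : K, (ρ d : Matrix (Fin 2) (Fin 2) K) *ᵥ v = c • v := by
  by_cases htriv : ∀ i ∈ I, ρ i = 1
  · obtain ⟨v, hv₀, hv⟩ := exists_common_eigenvector_of_commute
      (S := Set.range fun d => (ρ d : Matrix (Fin 2) (Fin 2) K)) (by
        rintro _ ⟨a, rfl⟩ _ ⟨b, rfl⟩
        exact (ρ.commute_of_commutator_mem hcomm htriv a b).units_val)
    exact ⟨v, hv₀, fun i hi => by simp [htriv i hi], fun d => hv _ ⟨d, rfl⟩⟩
  push Not at htriv
  obtain ⟨i₀, hi₀, hne⟩ := htriv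
  have hdet : ((ρ i₀ : Matrix (Fin 2) (Fin 2) K) - 1).det = 0 := by
    simpa [det_pow] using congrArg det (hI i₀ hi₀)
  obtain ⟨v, hv₀, hv⟩ := exists_mulVec_eq_zero_iff.mpr hdet
  rw [sub_mulVec, one_mulVec, sub_eq_zero] at hv
  exact ⟨v, hv₀, ρ.forall_mulVec_eq_self_and_exists_mulVec_eq_smul hI hi₀ hne hv₀ hv⟩

theorem exists_conj_upper_unipotent (hcomm : ∀ a b : D, a * b * a⁻¹ * b⁻¹ ∈ I)
    (hI : ∀ i ∈ I, ((ρ i : Matrix (Fin 2) (Fin 2) K) - 1) ^ 2 = 0) :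
    ∃ P : GL (Fin 2) K,
      (∀ d : D, ((P⁻¹ * ρ d * P : GL (Fin 2) K) : Matrix (Fin 2) (Fin 2) K) 1 0 = 0) ∧
      (∀ i ∈ I,
        ((P⁻¹ * ρ i * P : GL (Fin 2) K) : Matrix (Fin 2) (Fin 2) K) 1 0 = 0 ∧
        ((P⁻¹ * ρ i * P : GL (Fin 2) K) : Matrix (Fin 2) (Fin 2) K) 0 0 = 1 ∧
        ((P⁻¹ * ρ i * P : GL (Fin 2) K) : Matrix (Fin 2) (Fin 2) K) 1 1 = 1) := by
  obtain ⟨v, hv₀, hfix, heig⟩ := ρ.exists_common_eigenvector hcomm hI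
  obtain ⟨P, hP⟩ := GeneralLinearGroup.exists_mulVec_single_eq hv₀
  refine ⟨P, fun d => ?_, fun i hi => ?_⟩
  · obtain ⟨c, hc⟩ := heig d
    exact (GeneralLinearGroup.conj_apply_of_mulVec_eq_smul (hP ▸ hc)).1
  · obtain ⟨h₁₀, h₀₀⟩ := GeneralLinearGroup.conj_apply_of_mulVec_eq_smul (P := P) (M := ρ i)
      (c := 1) (by rw [hP, one_smul, hfix i hi])
    refine ⟨h₁₀, h₀₀, ?_⟩
    have hdet := det_fin_two ((P⁻¹ * ρ i * P : GL (Fin 2) K) : Matrix (Fin 2) (Fin 2) K)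
    rwa [h₁₀, h₀₀, Units.val_mul, Units.val_mul, det_units_conj',
      (sub_one_sq_eq_zero_iff_fin_two.mp (hI i hi)).2, mul_zero, sub_zero, one_mul, eq_comm] at hdet

end MonoidHom

/-- Let `K` be an algebraically closed field, `D` a group, `I` a normal subgroup of `D`
with commutative quotient, and `ρ : D → GL₂(K)` a homomorphism. The following are
equivalent:
(i) `ρ` is unipotent on `I`;
(ii) `tr ρ(i) = 2` and `det ρ(i) = 1` for all `i ∈ I`;
(iii) `ρ(D)` can be simultaneously upper-triangularized with `ρ(I)` unipotent
upper-triangular;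
(iv) `det ρ(i) = 1` and `tr (ρ(d)·ρ(i)) = tr ρ(d)` for all `i ∈ I`, `d ∈ D`. -/
theorem stmt6 {K : Type*} [Field K] [IsAlgClosed K] {D : Type*} [Group D]
    (I : Subgroup D) [I.Normal]
    (hcomm : ∀ a b : D, a * b * a⁻¹ * b⁻¹ ∈ I)
    (ρ : D →* GL (Fin 2) K) :
    List.TFAE [
      ∀ i ∈ I, ((ρ i : Matrix (Fin 2) (Fin 2) K) - 1) ^ 2 = 0,
      ∀ i ∈ I, (ρ i : Matrix (Fin 2) (Fin 2) K).trace = 2 ∧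
        (ρ i : Matrix (Fin 2) (Fin 2) K).det = 1,
      ∃ P : GL (Fin 2) K,
        (∀ d : D, ((P⁻¹ * ρ d * P : GL (Fin 2) K) : Matrix (Fin 2) (Fin 2) K) 1 0 = 0) ∧
        (∀ i ∈ I,
          ((P⁻¹ * ρ i * P : GL (Fin 2) K) : Matrix (Fin 2) (Fin 2) K) 1 0 = 0 ∧
          ((P⁻¹ * ρ i * P : GL (Fin 2) K) : Matrix (Fin 2) (Fin 2) K) 0 0 = 1 ∧
          ((P⁻¹ * ρ i * P : GL (Fin 2) K) : Matrix (Fin 2) (Fin 2) K) 1 1 = 1),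
      ∀ i ∈ I, (ρ i : Matrix (Fin 2) (Fin 2) K).det = 1 ∧
        ∀ d : D,
          ((ρ d : Matrix (Fin 2) (Fin 2) K) * (ρ i : Matrix (Fin 2) (Fin 2) K)).trace =
            (ρ d : Matrix (Fin 2) (Fin 2) K).trace
    ] := by
  tfae_have 1 ↔ 2 := forall₂_congr fun _ _ => sub_one_sq_eq_zero_iff_fin_two
  tfae_have 1 → 3 := ρ.exists_conj_upper_unipotent hcomm
  tfae_have 3 → 4 := by
    rintro ⟨P, hD, hI⟩ i hi
    obtain ⟨h₁₀, h₀₀, h₁₁⟩ := hI i hi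
    exact ⟨GeneralLinearGroup.det_eq_one_of_conj_unipotent h₁₀ h₀₀ h₁₁,
      fun d => GeneralLinearGroup.trace_mul_eq_of_conj_unipotent (hD d) h₁₀ h₀₀ h₁₁⟩
  tfae_have 4 → 2 := fun h i hi => ⟨by simpa using (h i hi).2 1, (h i hi).1⟩
  tfae_finish
end

section
/- Let K be a field, let A be a 2×2 matrix over K with det(A) = 1, and let N be a natural number. Suppose A^N is conjugate to A in GL₂(K), i.e., there exists an invertible 2×2 matrix C over K with C·A·C⁻¹ = A^N. Then every eigenvalue λ ∈ K of A (i.e., every λ ∈ K with det(A − λ·1) = 0) satisfies λ^(N−1) = 1 or λ^(N+1) = 1. -/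
/-- Let `A` be a 2×2 matrix over a field `K` with `det A = 1`, and suppose `A^N` is
conjugate to `A` in `GL₂(K)`. Then every eigenvalue `λ ∈ K` of `A` satisfies
`λ^(N−1) = 1` or `λ^(N+1) = 1`. -/
theorem stmt7 {K : Type*} [Field K] (A : Matrix (Fin 2) (Fin 2) K)
    (hA : A.det = 1) (N : ℕ) (C : Matrix (Fin 2) (Fin 2) K) (hC : IsUnit C)
    (hconj : C * A * C⁻¹ = A ^ N) (lam : K)
    (hlam : (A - lam • (1 : Matrix (Fin 2) (Fin 2) K)).det = 0) :
    lam ^ (N - 1) = 1 ∨ lam ^ (N + 1) = 1 := by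
  have hdet2 : ∀ (M : Matrix (Fin 2) (Fin 2) K) (x : K),
      (M - x • (1 : Matrix (Fin 2) (Fin 2) K)).det
        = x ^ 2 - Matrix.trace M * x + M.det := by
    intro M x
    simp only [Matrix.det_fin_two, Matrix.trace_fin_two, Matrix.sub_apply,
      Matrix.smul_apply, Matrix.one_apply_eq, Matrix.one_apply_ne,
      Fin.zero_eq_one_iff, Matrix.one_apply]
    norm_num
    ring
  have hCinv : C⁻¹ * C = 1 :=
    Matrix.nonsing_inv_mul C ((Matrix.isUnit_iff_isUnit_det C).mp hC)
  have htr : (A ^ N).trace = A.trace := by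
    rw [← hconj]
    calc (C * A * C⁻¹).trace = (C⁻¹ * (C * A)).trace := Matrix.trace_mul_comm _ _
      _ = A.trace := by rw [← mul_assoc, hCinv, one_mul]
  have hfac : (A ^ N - lam ^ N • (1 : Matrix (Fin 2) (Fin 2) K)).det = 0 := by
    have hc : Commute A (lam • (1 : Matrix (Fin 2) (Fin 2) K)) :=
      (Commute.one_right A).smul_right lam
    have hg := hc.geom_sum₂_mul N
    have h1 : (lam • (1 : Matrix (Fin 2) (Fin 2) K)) ^ N = lam ^ N • 1 := by
      rw [smul_pow, one_pow]
    rw [h1] at hg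
    rw [← hg, Matrix.det_mul, hlam, mul_zero]
  have e1 : lam ^ 2 - A.trace * lam + 1 = 0 := by
    rw [← hA, ← hdet2]; exact hlam
  have e2 : (lam ^ N) ^ 2 - A.trace * lam ^ N + 1 = 0 := by
    have := hdet2 (A ^ N) (lam ^ N)
    rw [hfac, htr, Matrix.det_pow, hA, one_pow] at this
    exact this.symm
  have hlam0 : lam ≠ 0 := by
    intro h
    rw [h] at e1
    simp at e1
  have key : (lam ^ N - lam) * (lam ^ (N + 1) - 1) = 0 := by
    linear_combination lam * e2 - lam ^ N * e1
  rcases mul_eq_zero.mp key with h | h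
  · left
    have hNl : lam ^ N = lam := sub_eq_zero.mp h
    cases N with
    | zero => exact Nat.zero_sub 1 ▸ (pow_zero lam)
    | succ n =>
        simp only [Nat.add_sub_cancel]
        have : lam ^ n * lam = 1 * lam := by
          rw [one_mul, ← pow_succ]; exact hNl
        exact mul_right_cancel₀ hlam0 this
  · right
    exact sub_eq_zero.mp h
end

section
/- Let G be a group and b : G → F₂ a function. Define t : G → F₂[ε] by t(g) = b(g)·ε and d : G → F₂[ε]ˣ by d(g) = 1 for all g. Then (t, d) is a pseudorepresentation of G on F₂[ε] if and only if b(1) = 0 and b(g²h) = b(h) for all g, h ∈ G. -/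
private lemma smul_eps_eq (x : ZMod 2) :
    x • (DualNumber.eps : DualNumber (ZMod 2)) = TrivSqZeroExt.inr x := by
  ext <;> simp

private lemma two_eq : (2 : DualNumber (ZMod 2)) = TrivSqZeroExt.inr 0 := by
  ext <;> simp <;> decide

/-- For a function `b : G → 𝔽₂`, the pair `(t, d)` with `t g = b g · ε` (in the dual
numbers `𝔽₂[ε]`) and `d ≡ 1` is a pseudorepresentation of `G` on `𝔽₂[ε]` if and only if
`b 1 = 0` and `b (g² h) = b h` for all `g, h ∈ G`. -/
theorem stmt10 {G : Type*} [Group G] (b : G → ZMod 2) :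
    IsPseudoRep (fun g => b g • (DualNumber.eps : DualNumber (ZMod 2)))
      (fun _ => (1 : DualNumber (ZMod 2))) ↔
      (b 1 = 0 ∧ ∀ g h : G, b (g ^ 2 * h) = b h) := by
  have hchar : ∀ x y : ZMod 2, x + y = 0 ↔ x = y := by decide
  constructor
  · rintro ⟨h1, -, -, -, -, hdet⟩
    have key : ∀ g h : G, b (g⁻¹ * h) = b (g * h) := by
      intro g h
      have := hdet g h
      simp only [one_mul, smul_eps_eq] at this
      rw [← TrivSqZeroExt.inr_add] at this
      have h0 : TrivSqZeroExt.inr (b (g⁻¹ * h) + b (g * h)) =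
          (TrivSqZeroExt.inr 0 : DualNumber (ZMod 2)) := by
        rw [this]; ext <;> simp
      exact (hchar _ _).mp (TrivSqZeroExt.inr_injective h0)
    constructor
    · simp only [smul_eps_eq, two_eq] at h1
      exact TrivSqZeroExt.inr_injective h1
    · intro g h
      have h1' := key g (g * h)
      have h2' : g * (g * h) = g ^ 2 * h := by simp [pow_two, mul_assoc]
      rw [h2', inv_mul_cancel_left] at h1'
      exact h1'.symm
  · rintro ⟨h1, hsq⟩
    -- b is invariant under left multiplication by any square
    have keyinv : ∀ g h : G, b (g⁻¹ * h) = b (g * h) := by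
      intro g h
      have := hsq g (g⁻¹ * h)
      have e : g ^ 2 * (g⁻¹ * h) = g * h := by simp [pow_two, mul_assoc]
      rw [e] at this
      exact this.symm
    have hcomm : ∀ g h : G, b (g * h) = b (h * g) := by
      intro g h
      have e : g * h = g ^ 2 * ((g⁻¹ * h) ^ 2 * ((h⁻¹) ^ 2 * (h * g))) := by simp [pow_two, mul_assoc]
      rw [e, hsq, hsq, hsq]
    refine ⟨?_, rfl, fun g h => (one_mul _).symm, fun g => isUnit_one, ?_, ?_⟩
    · simp only [smul_eps_eq, two_eq, h1]
    · intro g h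
      simp only [hcomm g h]
    · intro g h
      simp only [one_mul, smul_eps_eq]
      rw [← TrivSqZeroExt.inr_add, (hchar _ _).mpr (keyinv g h),
        TrivSqZeroExt.inr_mul_inr]
      simp
end

section
/- Let R = F₂⟦x, y, z⟧. Let f ∈ R be a power series involving only the variables x and y whose coefficients vanish in all total degrees ≤ 1, and let g ∈ R be a power series involving only the variables y and z whose coefficients vanish in all total degrees ≤ 1. Then the principal ideals (z − f) and (x − g) are distinct prime ideals of R, and (z − f) ∩ (x − g) = ((z − f)·(x − g)). -/
/-!
If `f` has order at least two, then `y ↦ divX i (h + f * y)` strictly raises the order of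
differences, so it has a fixed point `q`; this gives a division `h = (X i - f) * q + r` with a
remainder `r` not involving `X i`. Such a remainder determines `q`: were `(X i - f) * q` free of
`X i` with `q ≠ 0`, its coefficient at `d + single i 1`, for `d` of minimal degree in `q`, would be
`coeff d q ≠ 0`. If `X i - f` divides `a * b`, it then divides the product of the remainders,
which is free of `X i` and hence zero, so `X i - f` is prime. The linear term `X 2` of
`X 2 - f` cannot occur in a multiple of `X 0 - g`, and for a prime `q` not dividing `p` one has
`(p) ⊓ (q) = (p * q)`.
-/

open MvPowerSeries Finsupp

namespace MvPowerSeries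

variable {σ R : Type*} [CommRing R]

theorem exists_fixedPoint_of_order_contracting (Φ : MvPowerSeries σ R → MvPowerSeries σ R)
    (hΦ : ∀ x y, (x - y).order + 1 ≤ (Φ x - Φ y).order) : ∃ q, Φ q = q := by
  set x : ℕ → MvPowerSeries σ R := fun n => Φ^[n] 0 with hx
  have step : ∀ n : ℕ, (n : ℕ∞) ≤ (x (n + 1) - x n).order := by
    intro n
    induction n with
    | zero => exact bot_le
    | succ n ih =>
      calc ((n + 1 : ℕ) : ℕ∞) ≤ (x (n + 1) - x n).order + 1 := by push_cast; gcongr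
        _ ≤ (x (n + 2) - x (n + 1)).order := by
          simpa only [hx, Function.iterate_succ_apply'] using hΦ (x (n + 1)) (x n)
  have cauchy : ∀ n m : ℕ, n ≤ m → (n : ℕ∞) ≤ (x m - x n).order := by
    intro n m hnm
    induction m, hnm using Nat.le_induction with
    | base => simp
    | succ m hnm ih =>
      calc (n : ℕ∞) ≤ min (x (m + 1) - x m).order (x m - x n).order :=
            le_min ((Nat.cast_le.mpr hnm).trans (step m)) ih
        _ ≤ (x (m + 1) - x n).order := by
          simpa only [sub_add_sub_cancel] using
            min_order_le_add (f := x (m + 1) - x m) (g := x m - x n)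
  -- by `cauchy`, the coefficients of degree `< n` are constant along `x n, x (n + 1), …`
  let q : MvPowerSeries σ R := fun d => coeff d (x (degree d + 1))
  have approx : ∀ n : ℕ, (n : ℕ∞) ≤ (q - x n).order := by
    intro n
    refine le_order fun d hd => ?_
    have hdn : degree d + 1 ≤ n := by exact_mod_cast Order.add_one_le_of_lt hd
    have := coeff_of_lt_order (f := x n - x (degree d + 1)) (d := d)
      ((Nat.cast_lt.mpr (Nat.lt_succ_self _)).trans_le (cauchy _ _ hdn))
    rw [map_sub] at this ⊢
    exact sub_eq_zero.mpr (sub_eq_zero.mp this).symm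
  refine ⟨q, ?_⟩
  rw [← sub_eq_zero, ← order_eq_top_iff, ← top_le_iff]
  refine ENat.forall_natCast_le_iff_le.mp fun n _ => ?_
  have hΦx : Φ (x n) = x (n + 1) := by simp only [hx, Function.iterate_succ_apply']
  calc (n : ℕ∞) ≤ min ((q - x n).order + 1) (x (n + 1) - q).order := by
        refine le_min ((approx n).trans le_self_add) ?_
        rw [← order_neg, neg_sub]
        exact (Nat.cast_le.mpr n.le_succ).trans (approx (n + 1))
    _ ≤ min (Φ q - Φ (x n)).order (x (n + 1) - q).order := by gcongr; exact hΦ q (x n)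
    _ ≤ (Φ q - q).order := by
        simpa only [hΦx, sub_add_sub_cancel] using
          min_order_le_add (f := Φ q - Φ (x n)) (g := x (n + 1) - q)

noncomputable def divX (i : σ) : MvPowerSeries σ R →+ MvPowerSeries σ R where
  toFun w d := coeff (d + single i 1) w
  map_zero' := rfl
  map_add' _ _ := rfl

theorem coeff_divX (i : σ) (d : σ →₀ ℕ) (w : MvPowerSeries σ R) :
    coeff d (divX i w) = coeff (d + single i 1) w := rfl

theorem le_order_divX (i : σ) {w : MvPowerSeries σ R} {n : ℕ∞} (hw : n + 1 ≤ w.order) :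
    n ≤ (divX i w).order := by
  refine le_order fun d hd => ?_
  rw [coeff_divX]
  refine coeff_of_lt_order ?_
  calc ((degree (d + single i 1) : ℕ) : ℕ∞) = degree d + 1 := by simp
    _ < n + 1 := (ENat.add_lt_add_iff_right ENat.one_ne_top).mpr hd
    _ ≤ w.order := hw

theorem coeff_X_mul_divX (i : σ) {d : σ →₀ ℕ} (hd : d i ≠ 0) (w : MvPowerSeries σ R) :
    coeff d (X i * divX i w) = coeff d w := by
  have hle : single i 1 ≤ d := single_le_iff.mpr (Nat.one_le_iff_ne_zero.mpr hd)
  rw [X_def, coeff_monomial_mul, if_pos hle, one_mul, coeff_divX, tsub_add_cancel_of_le hle]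

def FreeOf (i : σ) (r : MvPowerSeries σ R) : Prop :=
  ∀ d : σ →₀ ℕ, d i ≠ 0 → coeff d r = 0

theorem freeOf_sub_X_mul_divX (i : σ) (w : MvPowerSeries σ R) :
    FreeOf i (w - X i * divX i w) := fun d hd => by
  rw [map_sub, coeff_X_mul_divX i hd, sub_self]

theorem FreeOf.mul {i : σ} {a b : MvPowerSeries σ R} (ha : FreeOf i a) (hb : FreeOf i b) :
    FreeOf i (a * b) := by
  classical
  intro d hd
  refine Finset.sum_eq_zero fun p hp => ?_
  have hpi : p.1 i + p.2 i = d i := by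
    rw [← Finset.HasAntidiagonal.mem_antidiagonal.mp hp, Finsupp.add_apply]
  rcases Nat.eq_zero_or_pos (p.1 i) with h1 | h1
  · rw [hb p.2 (by omega), mul_zero]
  · rw [ha p.1 h1.ne', zero_mul]

theorem exists_eq_X_sub_mul_add (i : σ) {f : MvPowerSeries σ R} (hf : 2 ≤ f.order)
    (h : MvPowerSeries σ R) : ∃ q r, h = (X i - f) * q + r ∧ FreeOf i r := by
  obtain ⟨q, hq⟩ := exists_fixedPoint_of_order_contracting (fun y => divX i (h + f * y))
    fun x y => by
      rw [← map_sub, add_sub_add_left_eq_sub, ← mul_sub]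
      refine le_order_divX i ?_
      calc (x - y).order + 1 + 1 = 2 + (x - y).order := by
            rw [add_assoc, one_add_one_eq_two, add_comm]
        _ ≤ f.order + (x - y).order := by gcongr
        _ ≤ (f * (x - y)).order := le_order_mul
  refine ⟨q, h + f * q - X i * q, by ring, ?_⟩
  simpa only [hq] using freeOf_sub_X_mul_divX i (h + f * q)

theorem eq_zero_of_freeOf_X_sub_mul (i : σ) {f q : MvPowerSeries σ R} (hf : 2 ≤ f.order)
    (hfree : FreeOf i ((X i - f) * q)) : q = 0 := by
  by_contra hq
  obtain ⟨d, hd, hdeg⟩ := exists_coeff_ne_zero_and_order (ne_zero_iff_order_finite.mp hq)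
  have hfq : coeff (d + single i 1) (f * q) = 0 := by
    refine coeff_of_lt_order ?_
    calc ((degree (d + single i 1) : ℕ) : ℕ∞) = degree d + 1 := by simp
      _ < 2 + degree d := by
        rw [add_comm]; exact (ENat.add_lt_add_iff_right (ENat.natCast_ne_top _)).mpr (by norm_num)
      _ ≤ f.order + q.order := by rw [hdeg]; gcongr
      _ ≤ (f * q).order := le_order_mul
  have := hfree (d + single i 1) (by simp)
  rw [sub_mul, map_sub, mul_comm, X_def, coeff_add_mul_monomial, mul_one, hfq, sub_zero] at this
  exact hd this

theorem coeff_single_X_sub (i : σ) {f : MvPowerSeries σ R} (hf : 2 ≤ f.order) :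
    coeff (single i 1) (X i - f) = 1 := by
  have hlt : ((degree (single i 1) : ℕ) : ℕ∞) < 2 := by simp
  rw [map_sub, coeff_of_lt_order (f := f) (hlt.trans_le hf)]
  classical simp [coeff_X]

theorem prime_X_sub [IsDomain R] (i : σ) {f : MvPowerSeries σ R} (hf : 2 ≤ f.order) :
    Prime (X i - f) := by
  refine ⟨fun h0 => by simpa [h0] using coeff_single_X_sub i hf, fun hu => ?_, ?_⟩
  · have hf0 : constantCoeff f = 0 := coeff_of_lt_order ((by simp : _ < (2 : ℕ∞)).trans_le hf)
    simpa [hf0] using hu.map constantCoeff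
  intro a b ⟨c, hab⟩
  obtain ⟨qa, ra, rfl, hra⟩ := exists_eq_X_sub_mul_add i hf a
  obtain ⟨qb, rb, rfl, hrb⟩ := exists_eq_X_sub_mul_add i hf b
  obtain ⟨e, hdiv⟩ : (X i - f) ∣ ra * rb :=
    ⟨c - (qa * (X i - f) * qb + qa * rb + ra * qb), by linear_combination hab⟩
  have hfree : FreeOf i ((X i - f) * e) := hdiv ▸ hra.mul hrb
  have hzero : ra * rb = 0 := by rw [hdiv, eq_zero_of_freeOf_X_sub_mul i hf hfree, mul_zero]
  rcases mul_eq_zero.mp hzero with rfl | rfl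
  · exact Or.inl ⟨qa, by rw [add_zero]⟩
  · exact Or.inr ⟨qb, by rw [add_zero]⟩

theorem not_X_sub_dvd_X_sub [Nontrivial R] {i j : σ} (hij : i ≠ j) {f g : MvPowerSeries σ R}
    (hf : 2 ≤ f.order) (hg : 2 ≤ g.order) : ¬ (X i - g) ∣ (X j - f) := by
  rintro ⟨c, hc⟩
  have hgc : coeff (single j 1) (g * c) = 0 := by
    refine coeff_of_lt_order ?_
    calc ((degree (single j 1) : ℕ) : ℕ∞) < 2 := by simp
      _ ≤ g.order + c.order := le_add_right hg
      _ ≤ (g * c).order := le_order_mul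
  have hXc : coeff (single j 1) (X i * c) = 0 := by
    rw [X_def, coeff_monomial_mul, if_neg]
    rw [single_le_iff, single_eq_of_ne hij]
    exact Nat.not_succ_le_zero 0
  have := coeff_single_X_sub j hf
  rw [hc, sub_mul, map_sub, hgc, hXc, sub_zero] at this
  exact zero_ne_one this

end MvPowerSeries

theorem Ideal.span_singleton_inf_span_singleton_of_prime {R : Type*} [CommSemiring R] {p q : R}
    (hq : Prime q) (hqp : ¬ q ∣ p) : span {p} ⊓ span {q} = span {p * q} := by
  refine le_antisymm (fun x hx => ?_) ?_
  · obtain ⟨⟨a, rfl⟩, hqx⟩ := And.imp mem_span_singleton.mp mem_span_singleton.mp hx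
    obtain ⟨b, rfl⟩ := (hq.dvd_or_dvd hqx).resolve_left hqp
    exact mem_span_singleton.mpr ⟨b, by ring⟩
  · rw [← span_singleton_mul_span_singleton]
    exact mul_le_inf

theorem stmt12_general (f g : MvPowerSeries (Fin 3) (ZMod 2))
    (hfdeg : ∀ d : Fin 3 →₀ ℕ, (∑ i, d i) ≤ 1 → coeff d f = 0)
    (hgdeg : ∀ d : Fin 3 →₀ ℕ, (∑ i, d i) ≤ 1 → coeff d g = 0) :
    (Ideal.span {X 2 - f} : Ideal (MvPowerSeries (Fin 3) (ZMod 2))).IsPrime ∧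
    (Ideal.span {X 0 - g} : Ideal (MvPowerSeries (Fin 3) (ZMod 2))).IsPrime ∧
    (Ideal.span {X 2 - f} : Ideal (MvPowerSeries (Fin 3) (ZMod 2))) ≠ Ideal.span {X 0 - g} ∧
    (Ideal.span {X 2 - f} : Ideal (MvPowerSeries (Fin 3) (ZMod 2))) ⊓ Ideal.span {X 0 - g} =
      Ideal.span {(X 2 - f) * (X 0 - g)} := by
  have two_le_order (φ : MvPowerSeries (Fin 3) (ZMod 2))
      (hφ : ∀ d : Fin 3 →₀ ℕ, (∑ i, d i) ≤ 1 → coeff d φ = 0) : 2 ≤ φ.order :=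
    le_order fun d hd => hφ d <| by
      rw [← degree_eq_sum]; exact Nat.lt_succ_iff.mp (by exact_mod_cast hd)
  have hf := two_le_order f hfdeg
  have hg := two_le_order g hgdeg
  have hpf := prime_X_sub 2 hf
  have hpg := prime_X_sub 0 hg
  have hndvd : ¬ (X 0 - g) ∣ (X 2 - f) := not_X_sub_dvd_X_sub (by decide) hf hg
  exact ⟨Ideal.isPrime_span_singleton_of_prime hpf, Ideal.isPrime_span_singleton_of_prime hpg,
    fun h => hndvd (Ideal.span_singleton_le_span_singleton.mp h.le),
    Ideal.span_singleton_inf_span_singleton_of_prime hpg hndvd⟩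

/-- In `R = 𝔽₂⟦x, y, z⟧` (variables `x = X 0`, `y = X 1`, `z = X 2`), if `f` involves
only `x, y` and `g` involves only `y, z`, both with vanishing coefficients in total
degrees ≤ 1, then `(z − f)` and `(x − g)` are distinct prime ideals and their
intersection is the principal ideal `((z − f)·(x − g))`. -/
theorem stmt12 (f g : MvPowerSeries (Fin 3) (ZMod 2))
    (hfxy : ∀ d : Fin 3 →₀ ℕ, coeff d f ≠ 0 → d 2 = 0)
    (hfdeg : ∀ d : Fin 3 →₀ ℕ, (∑ i, d i) ≤ 1 → coeff d f = 0)
    (hgyz : ∀ d : Fin 3 →₀ ℕ, coeff d g ≠ 0 → d 0 = 0)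
    (hgdeg : ∀ d : Fin 3 →₀ ℕ, (∑ i, d i) ≤ 1 → coeff d g = 0) :
    (Ideal.span {X 2 - f} : Ideal (MvPowerSeries (Fin 3) (ZMod 2))).IsPrime ∧
    (Ideal.span {X 0 - g} : Ideal (MvPowerSeries (Fin 3) (ZMod 2))).IsPrime ∧
    (Ideal.span {X 2 - f} : Ideal (MvPowerSeries (Fin 3) (ZMod 2))) ≠ Ideal.span {X 0 - g} ∧
    (Ideal.span {X 2 - f} : Ideal (MvPowerSeries (Fin 3) (ZMod 2))) ⊓ Ideal.span {X 0 - g} =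
      Ideal.span {(X 2 - f) * (X 0 - g)} :=
  stmt12_general f g hfdeg hgdeg
end

section
/- Let S = F₂⟦x, y, z, w⟧ / (x·z, x·w, (z + w)²). Then the image of z + w in S is nilpotent, the nilradical of S is the ideal generated by the image of z + w, and the maximal reduced quotient of S is isomorphic as an F₂-algebra to F₂⟦x, y, z⟧ / (x·z). -/
/-!
The radical of `I = (xz, xw, (z + w)²)` is `K = (xz, z + w)`: `K` contains `I` (as
`xw = x(z + w) - xz`), and both generators of `K` have a power in `I`. `K` is radical because the
transvection `w ↦ w + z` followed by `w ↦ 0` identifies `𝔽₂⟦x,y,z,w⟧ ⧸ K` with `𝔽₂⟦x,y,z⟧ ⧸ (xz)`,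
which is reduced since `x` and `z` are non-associated primes. So the nilradical of `S` is
`K ⧸ I = (z + w)` (as `xz = 0` in `S`), and `S ⧸ nil(S) ≃ 𝔽₂⟦x,y,z,w⟧ ⧸ K ≃ 𝔽₂⟦x,y,z⟧ ⧸ (xz)`.
-/

open MvPowerSeries

/-- The ideal `(x·z, x·w, (z + w)²)` of `𝔽₂⟦x, y, z, w⟧`, with variables
`x = X 0`, `y = X 1`, `z = X 2`, `w = X 3`. -/
noncomputable def I16 : Ideal (MvPowerSeries (Fin 4) (ZMod 2)) :=
  Ideal.span {X 0 * X 2, X 0 * X 3, (X 2 + X 3) ^ 2}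

namespace MvPowerSeries

section KillCompl

variable {σ τ R : Type*} [CommRing R] {e : σ ↪ τ} {t : τ}

theorem killCompl_eq_zero_iff (he : Set.range e = {t}ᶜ) {p : MvPowerSeries τ R} :
    killCompl e p = 0 ↔ X t ∣ p := by
  have hrange (m : τ →₀ ℕ) : m ∈ Set.range (Finsupp.embDomain e) ↔ m t = 0 := by
    rw [Finsupp.mem_range_embDomain_iff, he, Set.subset_compl_singleton_iff,
      Finset.mem_coe, Finsupp.notMem_support_iff]
  rw [X_dvd_iff, MvPowerSeries.ext_iff]
  simp only [coeff_killCompl, map_zero]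
  constructor
  · intro h m hm
    obtain ⟨x, rfl⟩ := (hrange m).2 hm
    exact h x
  · exact fun h x => h _ ((hrange _).1 ⟨x, rfl⟩)

theorem ker_killCompl (he : Set.range e = {t}ᶜ) :
    RingHom.ker (killCompl (R := R) e) = Ideal.span {X t} := by
  ext p
  rw [RingHom.mem_ker, Ideal.mem_span_singleton]
  exact killCompl_eq_zero_iff he

theorem comap_killCompl (he : Set.range e = {t}ᶜ) (J : Ideal (MvPowerSeries σ R)) :
    J.comap (killCompl e) = J.map (rename e) ⊔ Ideal.span {X t} := by
  have hsurj : Function.Surjective (killCompl (R := R) e) :=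
    fun p => ⟨rename e p, killCompl_rename_app p⟩
  have hJ : (J.map (rename e)).map (killCompl e) = J := by
    rw [← Ideal.map_coe, ← Ideal.map_coe (rename e), Ideal.map_map, ← AlgHom.comp_toRingHom,
      killCompl_comp_rename, AlgHom.id_toRingHom, Ideal.map_id]
  conv_lhs => rw [← hJ]
  rw [Ideal.comap_map_of_surjective _ hsurj, ← RingHom.ker_eq_comap_bot, ker_killCompl he]

end KillCompl

theorem prime_X {τ R : Type*} [CommRing R] [IsDomain R] (t : τ) :
    Prime (X t : MvPowerSeries τ R) := by
  have hX : (X t : MvPowerSeries τ R) ≠ 0 := fun h => by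
    simpa using congrArg (coeff (Finsupp.single t 1)) h
  have : IsDomain (MvPowerSeries {s // s ≠ t} R) := NoZeroDivisors.to_isDomain _
  have he : Set.range (Function.Embedding.subtype (· ≠ t)) = {t}ᶜ := by ext; simp
  rw [← Ideal.span_singleton_prime hX, ← ker_killCompl he]
  exact RingHom.ker_isPrime _

theorem not_X_dvd_X {σ R : Type*} [Semiring R] [Nontrivial R] {s t : σ} (hst : s ≠ t) :
    ¬ (X t : MvPowerSeries σ R) ∣ X s := by
  rw [X_dvd_iff]
  intro h
  simpa using h (Finsupp.single s 1) (Finsupp.single_eq_of_ne hst.symm)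

section Transvection

variable {σ R : Type*} [CommRing R] [DecidableEq σ] [Finite σ]

theorem hasSubst_update_X_add_smul_X (i j : σ) (c : R) :
    HasSubst (Function.update X i (X i + c • X j) : σ → MvPowerSeries σ R) :=
  hasSubst_of_constantCoeff_zero fun s => by
    rcases eq_or_ne s i with rfl | hs <;> simp [Function.update_of_ne, *]

noncomputable def transvection (i j : σ) (c : R) : MvPowerSeries σ R →ₐ[R] MvPowerSeries σ R :=
  substAlgHom (hasSubst_update_X_add_smul_X i j c)

theorem transvection_X_self (i j : σ) (c : R) : transvection i j c (X i) = X i + c • X j := by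
  rw [transvection, substAlgHom_X, Function.update_self]

theorem transvection_X_of_ne {i k : σ} (j : σ) (c : R) (hk : k ≠ i) :
    transvection i j c (X k) = X k := by
  rw [transvection, substAlgHom_X, Function.update_of_ne hk]

theorem transvection_zero (i j : σ) : transvection i j (0 : R) = AlgHom.id R _ := by
  refine AlgHom.ext fun f => ?_
  simp [transvection, subst_self]

theorem transvection_comp_transvection {i j : σ} (hij : i ≠ j) (c d : R) :
    (transvection i j c).comp (transvection i j d) = transvection i j (c + d) := by
  refine AlgHom.ext fun f => ?_
  simp only [AlgHom.comp_apply, transvection, coe_substAlgHom]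
  rw [subst_comp_subst_apply (hasSubst_update_X_add_smul_X i j d)
    (hasSubst_update_X_add_smul_X i j c)]
  congr 1
  funext s
  rw [← coe_substAlgHom (hasSubst_update_X_add_smul_X i j c)]
  change transvection i j c _ = _
  rcases eq_or_ne s i with rfl | hs
  · rw [Function.update_self, Function.update_self, map_add, map_smul, transvection_X_self,
      transvection_X_of_ne j c hij.symm, add_smul, add_assoc]
  · rw [Function.update_of_ne hs, Function.update_of_ne hs, transvection_X_of_ne j c hs]

noncomputable def transvectionEquiv {i j : σ} (hij : i ≠ j) (c : R) :
    MvPowerSeries σ R ≃ₐ[R] MvPowerSeries σ R :=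
  AlgEquiv.ofAlgHom (transvection i j c) (transvection i j (-c))
    (by rw [transvection_comp_transvection hij, add_neg_cancel, transvection_zero])
    (by rw [transvection_comp_transvection hij, neg_add_cancel, transvection_zero])

@[simp]
theorem transvectionEquiv_apply {i j : σ} (hij : i ≠ j) (c : R) (f : MvPowerSeries σ R) :
    transvectionEquiv hij c f = transvection i j c f :=
  rfl

end Transvection

noncomputable def quotientKillComplEquiv {σ τ R : Type*} [CommRing R] {e : σ ↪ τ} {t : τ}
    (he : Set.range e = {t}ᶜ) (J : Ideal (MvPowerSeries σ R)) :
    (MvPowerSeries τ R ⧸ (J.map (rename e) ⊔ Ideal.span {X t})) ≃ₐ[R] MvPowerSeries σ R ⧸ J :=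
  (Ideal.quotientEquivAlgOfEq R <| by
      ext p
      simp [← comap_killCompl he, Ideal.Quotient.eq_zero_iff_mem]).trans
    (Ideal.quotientKerAlgEquivOfSurjective (f := (Ideal.Quotient.mkₐ R J).comp (killCompl e))
      fun q => by
        obtain ⟨p, rfl⟩ := Ideal.Quotient.mk_surjective q
        exact ⟨rename e p, by simp⟩)

end MvPowerSeries

theorem Ideal.isRadical_span_mul_of_prime {A : Type*} [CommRing A] {p q : A} (hp : Prime p)
    (hq : Prime q) (hqp : ¬ q ∣ p) : (Ideal.span {p * q}).IsRadical := by
  rintro y ⟨k, hk⟩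
  rw [Ideal.mem_span_singleton] at hk ⊢
  obtain ⟨c, rfl⟩ := hp.dvd_of_dvd_pow (dvd_of_mul_right_dvd hk)
  have hqc : q ∣ p * c := hq.dvd_of_dvd_pow (dvd_of_mul_left_dvd hk)
  exact mul_dvd_mul_left p ((hq.dvd_or_dvd hqc).resolve_left hqp)

theorem nilradical_quotient_eq_map_radical {A : Type*} [CommRing A] (I : Ideal A) :
    nilradical (A ⧸ I) = I.radical.map (Ideal.Quotient.mk I) := by
  rw [← Ideal.map_comap_of_surjective (Ideal.Quotient.mk I) Ideal.Quotient.mk_surjective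
      (nilradical _), nilradical,
    Ideal.comap_radical, Ideal.zero_eq_bot, ← RingHom.ker_eq_comap_bot, Ideal.mk_ker]

section FourVariables

variable (R : Type*) [CommRing R]

/-- The transvection `w ↦ w + z` carries `(xz, w)` onto `(xz, z + w)`, and killing `w` identifies
`R⟦x,y,z,w⟧ ⧸ (xz, w)` with `R⟦x,y,z⟧ ⧸ (xz)`. -/
noncomputable def quotXzZwEquiv :
    (MvPowerSeries (Fin 4) R ⧸
        Ideal.span {(X 0 * X 2 : MvPowerSeries (Fin 4) R), X 2 + X 3}) ≃ₐ[R]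
      MvPowerSeries (Fin 3) R ⧸ Ideal.span {(X 0 * X 2 : MvPowerSeries (Fin 3) R)} :=
  have he : Set.range (Fin.castSuccEmb : Fin 3 ↪ Fin 4) = {3}ᶜ := by
    ext i; fin_cases i <;> simp
  have hxzw : (Ideal.span {(X 0 * X 2 : MvPowerSeries (Fin 3) R)}).map (rename Fin.castSuccEmb)
      ⊔ Ideal.span {X 3} = Ideal.span {(X 0 * X 2 : MvPowerSeries (Fin 4) R), X 3} := by
    rw [Ideal.map_span, Set.image_singleton, map_mul, rename_X, rename_X, Ideal.span_insert]
    rfl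
  (Ideal.quotientEquivAlg _ _ (transvectionEquiv (by decide : (3 : Fin 4) ≠ 2) (1 : R)) <| by
      rw [hxzw, Ideal.map_span, Set.image_pair]
      simp [map_mul, transvection_X_of_ne, transvection_X_self, add_comm]).symm.trans
    (quotientKillComplEquiv he _)

theorem isRadical_span_xz_zw [IsDomain R] :
    (Ideal.span {(X 0 * X 2 : MvPowerSeries (Fin 4) R), X 2 + X 3}).IsRadical := by
  have := (Ideal.isRadical_iff_quotient_reduced _).1 <|
    Ideal.isRadical_span_mul_of_prime (prime_X (R := R) (0 : Fin 3)) (prime_X 2)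
      (not_X_dvd_X (by decide))
  exact (Ideal.isRadical_iff_quotient_reduced _).2 <|
    isReduced_of_injective (quotXzZwEquiv R) (quotXzZwEquiv R).injective

end FourVariables

theorem I16_le_span_xz_zw :
    I16 ≤ Ideal.span {(X 0 * X 2 : MvPowerSeries (Fin 4) (ZMod 2)), X 2 + X 3} := by
  rw [I16, Ideal.span_le]
  rintro f (rfl | rfl | rfl)
  · exact Ideal.subset_span (by simp)
  · rw [SetLike.mem_coe, show (X 0 * X 3 : MvPowerSeries (Fin 4) (ZMod 2)) =
      X 0 * (X 2 + X 3) - X 0 * X 2 by ring]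
    exact sub_mem (Ideal.mul_mem_left _ _ (Ideal.subset_span (by simp)))
      (Ideal.subset_span (by simp))
  · exact Ideal.pow_mem_of_mem _ (Ideal.subset_span (by simp)) _ two_pos

theorem radical_I16 :
    I16.radical = Ideal.span {(X 0 * X 2 : MvPowerSeries (Fin 4) (ZMod 2)), X 2 + X 3} := by
  refine le_antisymm ((Ideal.radical_mono I16_le_span_xz_zw).trans
    (isRadical_span_xz_zw (ZMod 2))) ?_
  rw [Ideal.span_le]
  rintro f (rfl | rfl)
  · exact Ideal.le_radical (Ideal.subset_span (by simp))
  · exact ⟨2, Ideal.subset_span (by simp)⟩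

theorem nilradical_quotient_I16 :
    nilradical (MvPowerSeries (Fin 4) (ZMod 2) ⧸ I16) =
      Ideal.span {Ideal.Quotient.mk I16 (X 2 + X 3)} := by
  have hxz : Ideal.Quotient.mk I16 (X 0 * X 2) = 0 :=
    Ideal.Quotient.eq_zero_iff_mem.2 (Ideal.subset_span (by simp))
  rw [nilradical_quotient_eq_map_radical, radical_I16, Ideal.map_span, Set.image_pair, hxz,
    Ideal.span_insert_zero]

/-- Let `S = 𝔽₂⟦x, y, z, w⟧/(xz, xw, (z + w)²)`. Then the image of `z + w` in `S` is
nilpotent, the nilradical of `S` is generated by this image, and the maximal reduced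
quotient `S/nilradical S` is isomorphic as an `𝔽₂`-algebra to `𝔽₂⟦x, y, z⟧/(xz)`. -/
theorem stmt16 :
    IsNilpotent (Ideal.Quotient.mk I16 (X 2 + X 3)) ∧
    nilradical (MvPowerSeries (Fin 4) (ZMod 2) ⧸ I16) =
      Ideal.span {Ideal.Quotient.mk I16 (X 2 + X 3)} ∧
    Nonempty
      (((MvPowerSeries (Fin 4) (ZMod 2) ⧸ I16) ⧸
          nilradical (MvPowerSeries (Fin 4) (ZMod 2) ⧸ I16)) ≃ₐ[ZMod 2]
        (MvPowerSeries (Fin 3) (ZMod 2) ⧸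
          Ideal.span {(X 0 * X 2 : MvPowerSeries (Fin 3) (ZMod 2))})) := by
  refine ⟨mem_nilradical.1 ?_, nilradical_quotient_I16, ⟨?_⟩⟩
  · rw [nilradical_quotient_I16]
    exact Ideal.mem_span_singleton_self _
  · refine (Ideal.quotientEquivAlgOfEq (ZMod 2) ?_).trans <|
      (DoubleQuot.quotQuotEquivQuotOfLEₐ (ZMod 2) I16_le_span_xz_zw).trans (quotXzZwEquiv _)
    rw [nilradical_quotient_eq_map_radical, radical_I16]
    rfl
end

section
/- Every power series F ∈ F₂⟦x, y, z, w⟧ is congruent modulo the ideal (w², x·w, x·z) to a power series of the form a + w·b + c, where a ∈ F₂⟦x, y, z, w⟧ involves only the variables x and y, and b and c involve only the variables y and z. -/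
/-!
Split `F` by exponents (`x, y, z, w = X 0, X 1, X 2, X 3`): the monomials in `x, y` alone go to
`a`, those of the form `w · m` with `m` a monomial in `y, z` go to `w · b`, and the remaining
monomials in `y, z` (all divisible by `z`) go to `c`. Every monomial left in `F - (a + w b + c)`
is divisible by `w²`, `x w` or `x z`, and a power series all of whose monomials are divisible by
one of finitely many monomials lies in the ideal they generate.
-/

open MvPowerSeries

theorem Finsupp.single_add_single_le_iff {σ : Type*} {i j : σ} (hij : i ≠ j) {d : σ →₀ ℕ} :
    single i 1 + single j 1 ≤ d ↔ 1 ≤ d i ∧ 1 ≤ d j := by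
  refine ⟨fun h => ⟨?_, ?_⟩, fun ⟨hi, hj⟩ k => ?_⟩
  · simpa [hij] using h i
  · simpa [hij.symm] using h j
  · by_cases hki : k = i <;> by_cases hkj : k = j <;> simp_all

namespace MvPowerSeries

section Semiring

variable {σ R : Type*} [Semiring R]

theorem mem_span_monomial_of_coeff_ne_zero (S : Finset (σ →₀ ℕ)) {f : MvPowerSeries σ R}
    (hf : ∀ d, coeff d f ≠ 0 → ∃ n ∈ S, n ≤ d) :
    f ∈ Ideal.span ((fun n => monomial n (1 : R)) '' S) := by
  classical
  induction S using Finset.induction_on generalizing f with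
  | empty =>
    convert Ideal.zero_mem _
    ext d
    by_contra h
    simpa using hf d h
  | insert n S _ ih =>
    let q : MvPowerSeries σ R := fun d => coeff (d + n) f
    let r : MvPowerSeries σ R := fun d => if n ≤ d then 0 else coeff d f
    have hq (d) : coeff d q = coeff (d + n) f := rfl
    have hr (d) : coeff d r = if n ≤ d then 0 else coeff d f := rfl
    have hfqr : f = r + q * monomial n 1 := by
      ext d
      rw [map_add, coeff_mul_monomial, hr, hq]
      by_cases hnd : n ≤ d <;> simp [hnd, tsub_add_cancel_of_le]
    have hr_mem : r ∈ Ideal.span ((fun n => monomial n (1 : R)) '' S) := by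
      refine ih fun d hd => ?_
      rw [hr] at hd
      split_ifs at hd with hnd
      · exact absurd rfl hd
      · obtain ⟨m, hm, hmd⟩ := hf d hd
        exact ⟨m, (Finset.mem_insert.mp hm).resolve_left (by rintro rfl; exact hnd hmd), hmd⟩
    rw [hfqr]
    refine add_mem (Ideal.span_mono (Set.image_mono ?_) hr_mem)
      (Ideal.mul_mem_left _ _ (Ideal.subset_span ⟨n, by simp, rfl⟩))
    simp

end Semiring

noncomputable section

variable {R : Type*} [Ring R] (F : MvPowerSeries (Fin 4) R)

def partXY : MvPowerSeries (Fin 4) R := fun d => if d 2 = 0 ∧ d 3 = 0 then coeff d F else 0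

def partWYZ : MvPowerSeries (Fin 4) R :=
  fun d => if d 0 = 0 ∧ d 3 = 0 then coeff (d + Finsupp.single 3 1) F else 0

def partYZ : MvPowerSeries (Fin 4) R :=
  fun d => if d 0 = 0 ∧ d 2 ≠ 0 ∧ d 3 = 0 then coeff d F else 0

theorem coeff_partXY (d) : coeff d (partXY F) = if d 2 = 0 ∧ d 3 = 0 then coeff d F else 0 := rfl

theorem coeff_partWYZ (d) : coeff d (partWYZ F) =
    if d 0 = 0 ∧ d 3 = 0 then coeff (d + Finsupp.single 3 1) F else 0 := rfl

theorem coeff_partYZ (d) : coeff d (partYZ F) =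
    if d 0 = 0 ∧ d 2 ≠ 0 ∧ d 3 = 0 then coeff d F else 0 := rfl

theorem coeff_partXY_ne_zero {d : Fin 4 →₀ ℕ} (h : coeff d (partXY F) ≠ 0) :
    d 2 = 0 ∧ d 3 = 0 := by
  rw [coeff_partXY] at h
  exact (ite_ne_right_iff.mp h).1

theorem coeff_partWYZ_ne_zero {d : Fin 4 →₀ ℕ} (h : coeff d (partWYZ F) ≠ 0) :
    d 0 = 0 ∧ d 3 = 0 := by
  rw [coeff_partWYZ] at h
  exact (ite_ne_right_iff.mp h).1

theorem coeff_partYZ_ne_zero {d : Fin 4 →₀ ℕ} (h : coeff d (partYZ F) ≠ 0) :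
    d 0 = 0 ∧ d 3 = 0 := by
  rw [coeff_partYZ] at h
  obtain ⟨⟨h0, -, h3⟩, -⟩ := ite_ne_right_iff.mp h
  exact ⟨h0, h3⟩

theorem coeff_X_mul_partWYZ (d) : coeff d (X 3 * partWYZ F) =
    if d 0 = 0 ∧ d 3 = 1 then coeff d F else 0 := by
  rw [X_def, coeff_monomial_mul, coeff_partWYZ]
  simp only [Finsupp.single_le_iff]
  by_cases h3 : 1 ≤ d 3
  · have h31 : d 3 - 1 = 0 ↔ d 3 = 1 := by omega
    simp [h3, h31, tsub_add_cancel_of_le (Finsupp.single_le_iff.mpr h3)]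
  · simp [h3, show d 3 ≠ 1 by omega]

theorem coeff_sub_parts_ne_zero {d : Fin 4 →₀ ℕ}
    (hd : coeff d (F - (partXY F + X 3 * partWYZ F + partYZ F)) ≠ 0) :
    2 ≤ d 3 ∨ (1 ≤ d 0 ∧ 1 ≤ d 3) ∨ (1 ≤ d 0 ∧ 1 ≤ d 2) := by
  contrapose! hd
  rw [map_sub, map_add, map_add, coeff_partXY, coeff_X_mul_partWYZ, coeff_partYZ]
  split_ifs <;> first | omega | simp

end

end MvPowerSeries

/-- Every power series `F ∈ 𝔽₂⟦x, y, z, w⟧` (variables `x = X 0`, `y = X 1`, `z = X 2`,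
`w = X 3`) is congruent modulo the ideal `(w², x·w, x·z)` to one of the form
`a + w·b + c`, where `a` involves only `x, y` and `b, c` involve only `y, z`. -/
theorem stmt17 (F : MvPowerSeries (Fin 4) (ZMod 2)) :
    ∃ a b c : MvPowerSeries (Fin 4) (ZMod 2),
      (∀ d : Fin 4 →₀ ℕ, coeff d a ≠ 0 → d 2 = 0 ∧ d 3 = 0) ∧
      (∀ d : Fin 4 →₀ ℕ, coeff d b ≠ 0 → d 0 = 0 ∧ d 3 = 0) ∧
      (∀ d : Fin 4 →₀ ℕ, coeff d c ≠ 0 → d 0 = 0 ∧ d 3 = 0) ∧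
      F - (a + X 3 * b + c) ∈
        Ideal.span {(X 3 ^ 2 : MvPowerSeries (Fin 4) (ZMod 2)), X 0 * X 3, X 0 * X 2} := by
  refine ⟨partXY F, partWYZ F, partYZ F, fun _ => coeff_partXY_ne_zero F,
    fun _ => coeff_partWYZ_ne_zero F, fun _ => coeff_partYZ_ne_zero F, ?_⟩
  have hgens : ({X 3 ^ 2, X 0 * X 3, X 0 * X 2} : Set (MvPowerSeries (Fin 4) (ZMod 2))) =
      (fun n => monomial n 1) '' ↑({Finsupp.single 3 2, Finsupp.single 0 1 + Finsupp.single 3 1,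
        Finsupp.single 0 1 + Finsupp.single 2 1} : Finset (Fin 4 →₀ ℕ)) := by
    rw [X_pow_eq]
    simp [X_def, monomial_mul_monomial, Set.image_insert_eq]
  rw [hgens]
  refine mem_span_monomial_of_coeff_ne_zero _ fun d hd => ?_
  rcases coeff_sub_parts_ne_zero F hd with h | h | h
  · exact ⟨_, by simp, Finsupp.single_le_iff.mpr h⟩
  · exact ⟨_, by simp, (Finsupp.single_add_single_le_iff (by decide)).mpr h⟩
  · exact ⟨_, by simp, (Finsupp.single_add_single_le_iff (by decide)).mpr h⟩
end
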